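/- For any binary word X, N_0(X) · N_{01}(X) = N_{010}(X) + 2·N_{001}(X) + N_{01}(X). -/

import Mathlib

/-!
Prepending a letter `a` to `X` raises `N_{b w}(X)` by `N_w(X)` if `a = b` and leaves it unchanged
otherwise. Argue by induction on `X`: prepending `1` changes none of the counts in the identity,
while prepending `0` reduces the step to `N_0 N_1 = N_{01} + N_{10}` (a `0` and a `1` of `X` occur
either in the order `01` or `10`), which is proved by the same induction.
-/

def patCount (w X : List Bool) : ℕ := X.sublists.count w

namespace List

variable {α : Type*} [DecidableEq α]

theorem count_nil_sublists (l : List α) : l.sublists.count [] = 1 := by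
  induction l with
  | nil => rfl
  | cons a l ih => simp [(sublists_cons_perm_append a l).count_eq, ih, count_eq_zero]

theorem count_cons_sublists_cons (a b : α) (w l : List α) :
    (a :: l).sublists.count (b :: w) =
      l.sublists.count (b :: w) + if a = b then l.sublists.count w else 0 := by
  rw [(sublists_cons_perm_append a l).count_eq, count_append]
  split_ifs with hab
  · rw [hab, count_map_of_injective _ _ cons_injective]
  · simp [count_eq_zero, hab]

end List

@[simp]
theorem patCount_nil (X : List Bool) : patCount [] X = 1 :=
  X.count_nil_sublists

@[simp]
theorem patCount_cons_cons (b : Bool) (w : List Bool) (a : Bool) (X : List Bool) :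
    patCount (b :: w) (a :: X) = patCount (b :: w) X + if a = b then patCount w X else 0 :=
  List.count_cons_sublists_cons a b w X

theorem patCount_false_mul_patCount_true (X : List Bool) :
    patCount [false] X * patCount [true] X =
      patCount [false, true] X + patCount [true, false] X := by
  induction X with
  | nil => rfl
  | cons a X ih =>
    cases a <;>
      simp only [patCount_cons_cons, patCount_nil, Bool.false_eq_true, Bool.true_eq_false,
        ↓reduceIte] <;>
      linarith

theorem N0_mul_N01 (X : List Bool) :
    patCount [false] X * patCount [false, true] X
      = patCount [false, true, false] X + 2 * patCount [false, false, true] X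
        + patCount [false, true] X := by
  induction X with
  | nil => rfl
  | cons a X ih =>
    have h01 := patCount_false_mul_patCount_true X
    cases a <;>
      simp only [patCount_cons_cons, patCount_nil, Bool.true_eq_false, ↓reduceIte] <;>
      linarith
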